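/- If (X,T) is mean equicontinuous, then it is uniformly mean equicontinuous: for every ε > 0 there exists δ > 0 such that whenever d(x,y) ≤ δ, the lower density of {i ∈ ℕ : d(Tⁱx,Tⁱy) ≤ ε} is at least 1 - ε. -/

import Mathlib

open Filter Metric Set
open scoped Classical

noncomputable def lowerDensity (S : Set ℕ) : ℝ :=
  Filter.atTop.liminf (fun n => (((Finset.range (n + 1)).filter (fun i => i ∈ S)).card : ℝ) / (n + 1))

noncomputable def upperDensity (S : Set ℕ) : ℝ :=
  Filter.atTop.limsup (fun n => (((Finset.range (n + 1)).filter (fun i => i ∈ S)).card : ℝ) / (n + 1))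

/-!
A Lebesgue number for the cover of `X` by the balls `B(x, δₓ)` given by mean equicontinuity
(at scale `ε/2`) yields one `δ` such that any two `δ`-close points `y, z` lie in a common ball
`B(x, δₓ)`. Outside two sets of upper density `< ε/2` both orbits of `y` and `z` stay
`ε/2`-close to that of `x`, so by the triangle inequality `{i | d(Tⁱy, Tⁱz) ≤ ε}` has lower
density at least `1 - ε`.
-/

noncomputable def partialDensity (S : Set ℕ) (n : ℕ) : ℝ :=
  (((Finset.range (n + 1)).filter (fun i => i ∈ S)).card : ℝ) / (n + 1)

namespace partialDensity

lemma le_one (S : Set ℕ) (n : ℕ) : partialDensity S n ≤ 1 := by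
  rw [partialDensity, div_le_one (by positivity)]
  exact_mod_cast (Finset.card_filter_le _ _).trans (Finset.card_range _).le

lemma mono {S S' : Set ℕ} (h : S ⊆ S') (n : ℕ) : partialDensity S n ≤ partialDensity S' n := by
  unfold partialDensity
  gcongr

lemma union_le (A B : Set ℕ) (n : ℕ) :
    partialDensity (A ∪ B) n ≤ partialDensity A n + partialDensity B n := by
  unfold partialDensity
  rw [← add_div]
  gcongr
  norm_cast
  refine (Finset.card_le_card fun i => ?_).trans (Finset.card_union_le _ _)
  simp only [Finset.mem_filter, Finset.mem_union, Set.mem_union]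
  tauto

lemma compl (S : Set ℕ) (n : ℕ) : partialDensity Sᶜ n = 1 - partialDensity S n := by
  unfold partialDensity
  rw [eq_sub_iff_add_eq, ← add_div, div_eq_one_iff_eq (by positivity)]
  norm_cast
  have hsplit := Finset.card_filter_add_card_filter_not (s := Finset.range (n + 1)) (· ∈ S)
  rw [Finset.card_range, add_comm] at hsplit
  convert hsplit using 3
  ext
  simp only [Finset.mem_filter, Set.mem_compl_iff]

end partialDensity

lemma eventually_partialDensity_lt {S : Set ℕ} {a : ℝ} (h : upperDensity S < a) :
    ∀ᶠ n in atTop, partialDensity S n < a :=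
  eventually_lt_of_limsup_lt h (isBoundedUnder_of ⟨1, partialDensity.le_one S⟩)

lemma le_lowerDensity_of_eventually_le {S : Set ℕ} {a : ℝ}
    (h : ∀ᶠ n in atTop, a ≤ partialDensity S n) : a ≤ lowerDensity S :=
  le_liminf_of_le (isCoboundedUnder_ge_of_le atTop (partialDensity.le_one S)) h

lemma one_sub_add_le_lowerDensity {S A B : Set ℕ} {a b : ℝ} (hA : upperDensity A < a)
    (hB : upperDensity B < b) (hS : Sᶜ ⊆ A ∪ B) : 1 - (a + b) ≤ lowerDensity S := by
  refine le_lowerDensity_of_eventually_le ?_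
  filter_upwards [eventually_partialDensity_lt hA, eventually_partialDensity_lt hB]
    with n hAn hBn
  calc 1 - (a + b) ≤ 1 - partialDensity (A ∪ B) n := by
        linarith [partialDensity.union_le A B n]
    _ ≤ 1 - partialDensity Sᶜ n := by linarith [partialDensity.mono hS n]
    _ = partialDensity S n := by rw [partialDensity.compl, sub_sub_cancel]

lemma compl_setOf_dist_le_subset {X : Type*} [PseudoMetricSpace X] (f g h : ℕ → X) (ε : ℝ) :
    {i | dist (g i) (h i) ≤ ε}ᶜ ⊆
      {i | ε / 2 < dist (f i) (g i)} ∪ {i | ε / 2 < dist (f i) (h i)} := by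
  intro i hi
  by_contra hnot
  simp only [mem_compl_iff, mem_ofPred_eq, mem_union, not_or, not_lt] at hi hnot
  linarith [dist_triangle_left (g i) (h i) (f i)]

lemma exists_pos_forall_dist_le_exists_common_center {X : Type*} [PseudoMetricSpace X]
    [CompactSpace X] {r : X → ℝ} (hr : ∀ x, 0 < r x) :
    ∃ δ > 0, ∀ y z, dist y z ≤ δ → ∃ x, dist x y < r x ∧ dist x z < r x := by
  obtain ⟨δ, hδ, hball⟩ := lebesgue_number_lemma_of_metric isCompact_univ
    (fun x => isOpen_ball) (fun y _ => mem_iUnion.2 ⟨y, mem_ball_self (hr y)⟩)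
  refine ⟨δ / 2, half_pos hδ, fun y z hyz => ?_⟩
  obtain ⟨x, hx⟩ := hball y (mem_univ y)
  have hz : z ∈ ball y δ := mem_ball'.2 (by linarith)
  exact ⟨x, mem_ball'.1 (hx (mem_ball_self hδ)), mem_ball'.1 (hx hz)⟩

theorem meanEq_uniform_general {X : Type*} [MetricSpace X] [CompactSpace X]
    (T : X → X)
    (hme : ∀ x : X, ∀ ε > 0, ∃ δ > 0, ∀ y : X, dist x y ≤ δ →
      upperDensity {i : ℕ | ε < dist (T^[i] x) (T^[i] y)} < ε) :
    ∀ ε > 0, ∃ δ > 0, ∀ x y : X, dist x y ≤ δ →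
      1 - ε ≤ lowerDensity {i : ℕ | dist (T^[i] x) (T^[i] y) ≤ ε} := by
  intro ε hε
  choose r hr hme using fun x => hme x (ε / 2) (half_pos hε)
  obtain ⟨δ, hδ, hcenter⟩ := exists_pos_forall_dist_le_exists_common_center hr
  refine ⟨δ, hδ, fun y z hyz => ?_⟩
  obtain ⟨x, hxy, hxz⟩ := hcenter y z hyz
  simpa only [add_halves] using one_sub_add_le_lowerDensity (hme x y hxy.le) (hme x z hxz.le)
    (compl_setOf_dist_le_subset (T^[·] x) (T^[·] y) (T^[·] z) ε)

theorem meanEq_uniform {X : Type*} [MetricSpace X] [CompactSpace X]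
    (T : X → X) (hT : Continuous T)
    (hme : ∀ x : X, ∀ ε > 0, ∃ δ > 0, ∀ y : X, dist x y ≤ δ →
      upperDensity {i : ℕ | ε < dist (T^[i] x) (T^[i] y)} < ε) :
    ∀ ε > 0, ∃ δ > 0, ∀ x y : X, dist x y ≤ δ →
      1 - ε ≤ lowerDensity {i : ℕ | dist (T^[i] x) (T^[i] y) ≤ ε} :=
  meanEq_uniform_general T hme
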